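/- Assume the delay equation x'(t) = Σ_{j=0}^N A_j(t) x(t−r_j) is asymptotically hyperbolic and that Λ_L : W^{1,p}_μ → L^p_μ is bijective. For each s ∈ ℝ let F(s) = { φ ∈ C : there is a continuous bounded v : (−∞,s] → ℝⁿ with v_s = φ and v_t = T(t,τ)v_τ for all τ ≤ t ≤ s }. Then for every t ≥ s, the restriction of the solution operator T(t,s) to F(s) is a bijection from F(s) onto F(t). -/

import Mathlib

open MeasureTheory Filter Topology Set
open scoped ENNReal

noncomputable section

/-- The weighted measure `dμ = (1+t²)⁻¹ dt` on `ℝ`. -/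
def muW : Measure ℝ := volume.withDensity fun t => ENNReal.ofReal ((1 + t ^ 2)⁻¹)

/-- Weighted `L^p` norm; for `p = ∞` it is the essential supremum of `‖f t‖ (1+t²)⁻¹`,
as in the paper. -/
def lpNormW {E : Type*} [NormedAddCommGroup E] (p : ℝ≥0∞) (f : ℝ → E) : ℝ≥0∞ :=
  if p = ∞ then essSup (fun t => (‖f t‖₊ : ℝ≥0∞) * ENNReal.ofReal ((1 + t ^ 2)⁻¹)) volume
  else (∫⁻ t, (‖f t‖₊ : ℝ≥0∞) ^ p.toReal ∂muW) ^ (1 / p.toReal)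

/-- Membership in the weighted space `L^p_μ`. -/
def MemLpW {E : Type*} [NormedAddCommGroup E] (p : ℝ≥0∞) (f : ℝ → E) : Prop :=
  AEStronglyMeasurable f volume ∧ lpNormW p f < ⊤

/-- `x` is locally absolutely continuous with (locally integrable) derivative `g`. -/
def HasACDeriv {E : Type*} [NormedAddCommGroup E] [NormedSpace ℝ E] (x g : ℝ → E) : Prop :=
  (∀ a b : ℝ, IntervalIntegrable g volume a b) ∧
  ∀ a t : ℝ, x t = x a + ∫ s in a..t, g s

/-- Membership in the weighted Sobolev space `W^{1,p}_μ`. -/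
def MemW1pW {E : Type*} [NormedAddCommGroup E] [NormedSpace ℝ E] (p : ℝ≥0∞) (x : ℝ → E) : Prop :=
  MemLpW p x ∧ ∃ g, HasACDeriv x g ∧ MemLpW p g

/-- The delays satisfy `0 = r₀ < r₁ < ⋯ < r_N`. -/
def DelaysOK {N : ℕ} (r : Fin (N + 1) → ℝ) : Prop := r 0 = 0 ∧ StrictMono r

/-- The coefficient matrices are measurable and uniformly bounded on `ℝ`. -/
def CoeffOK {n N : ℕ} (A : Fin (N + 1) → ℝ → Matrix (Fin n) (Fin n) ℝ) : Prop :=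
  (∀ j i k, Measurable fun t => A j t i k) ∧
  ∃ β : ℝ, ∀ (j : Fin (N + 1)) (t : ℝ) (v : Fin n → ℝ), ‖(A j t).mulVec v‖ ≤ β * ‖v‖

/-- Hyperbolicity of the autonomous system `x' = Σ A₀ⱼ x(·−rⱼ)`:
`det Δ(iz) ≠ 0` for all real `z`, where `Δ(s) = sI − Σ A₀ⱼ e^{−s rⱼ}`. -/
def IsHyperbolic {n N : ℕ} (r : Fin (N + 1) → ℝ)
    (A0 : Fin (N + 1) → Matrix (Fin n) (Fin n) ℝ) : Prop :=
  ∀ z : ℝ,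
    ((Complex.I * z) • (1 : Matrix (Fin n) (Fin n) ℂ)
      - ∑ j, Complex.exp (-(Complex.I * z) * (r j)) • (A0 j).map (fun a => (a : ℂ))).det ≠ 0

/-- The equation `x' = Σ Aⱼ(t) x(·−rⱼ)` is asymptotically hyperbolic. -/
def AsympHyperbolic {n N : ℕ} (r : Fin (N + 1) → ℝ)
    (A : Fin (N + 1) → ℝ → Matrix (Fin n) (Fin n) ℝ) : Prop :=
  ∃ Ap Am : Fin (N + 1) → Matrix (Fin n) (Fin n) ℝ,
    (∀ j i k, Tendsto (fun t => A j t i k) atTop (𝓝 (Ap j i k))) ∧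
    (∀ j i k, Tendsto (fun t => A j t i k) atBot (𝓝 (Am j i k))) ∧
    IsHyperbolic r Ap ∧ IsHyperbolic r Am

/-- `Λ_L x = h`, i.e. `x` is locally absolutely continuous with
`x'(t) = Σ Aⱼ(t) x(t−rⱼ) + h(t)` a.e. -/
def SolvesNH {n N : ℕ} (r : Fin (N + 1) → ℝ)
    (A : Fin (N + 1) → ℝ → Matrix (Fin n) (Fin n) ℝ) (x h : ℝ → Fin n → ℝ) : Prop :=
  HasACDeriv x fun t => (∑ j, (A j t).mulVec (x (t - r j))) + h t

/-- `x` is a solution of `x'(t) = Σ Aⱼ(t)x(t−rⱼ)` on `[s,∞)` (with history on `[s−r_N, s]`). -/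
def IsSolFrom {n N : ℕ} (r : Fin (N + 1) → ℝ)
    (A : Fin (N + 1) → ℝ → Matrix (Fin n) (Fin n) ℝ) (x : ℝ → Fin n → ℝ) (s : ℝ) : Prop :=
  ContinuousOn x (Ici (s - r (Fin.last N))) ∧
  (∀ t₁ t₂, s ≤ t₁ → s ≤ t₂ →
    IntervalIntegrable (fun τ => ∑ j, (A j τ).mulVec (x (τ - r j))) volume t₁ t₂) ∧
  ∀ t, s ≤ t → x t = x s + ∫ τ in s..t, ∑ j, (A j τ).mulVec (x (τ - r j))

/-- `v` is a solution of the equation on `(−∞, s]` (a backward continuation). -/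
def IsSolUpTo {n N : ℕ} (r : Fin (N + 1) → ℝ)
    (A : Fin (N + 1) → ℝ → Matrix (Fin n) (Fin n) ℝ) (v : ℝ → Fin n → ℝ) (s : ℝ) : Prop :=
  ContinuousOn v (Iic s) ∧
  (∀ t₁ t₂, t₁ ≤ s → t₂ ≤ s →
    IntervalIntegrable (fun τ => ∑ j, (A j τ).mulVec (v (τ - r j))) volume t₁ t₂) ∧
  ∀ τ t, τ ≤ t → t ≤ s → v t = v τ + ∫ σ in τ..t, ∑ j, (A j σ).mulVec (v (σ - r j))

/-- `xₛ = φ`: the segment of `x` at time `s` equals `φ ∈ C = C([−r_N,0],ℝⁿ)`. -/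
def Matches {n N : ℕ} (r : Fin (N + 1) → ℝ) (x : ℝ → Fin n → ℝ) (s : ℝ)
    (φ : C(Set.Icc (-(r (Fin.last N))) (0 : ℝ), Fin n → ℝ)) : Prop :=
  ∀ θ : Set.Icc (-(r (Fin.last N))) (0 : ℝ), x (s + (θ : ℝ)) = φ θ

/-- `E(s)`: initial data whose forward solution is bounded, i.e. `sup_{t ≥ s} ‖T(t,s)φ‖ < ∞`. -/
def Eset {n N : ℕ} (r : Fin (N + 1) → ℝ)
    (A : Fin (N + 1) → ℝ → Matrix (Fin n) (Fin n) ℝ) (s : ℝ) :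
    Set (C(Set.Icc (-(r (Fin.last N))) (0 : ℝ), Fin n → ℝ)) :=
  {φ | ∃ x, IsSolFrom r A x s ∧ Matches r x s φ ∧
      ∃ M, ∀ t, s - r (Fin.last N) ≤ t → ‖x t‖ ≤ M}

/-- `F(s)`: initial data with a bounded backward continuation `v` with `vₜ = T(t,τ)v_τ`. -/
def Fset {n N : ℕ} (r : Fin (N + 1) → ℝ)
    (A : Fin (N + 1) → ℝ → Matrix (Fin n) (Fin n) ℝ) (s : ℝ) :
    Set (C(Set.Icc (-(r (Fin.last N))) (0 : ℝ), Fin n → ℝ)) :=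
  {φ | ∃ v, IsSolUpTo r A v s ∧ Matches r v s φ ∧ ∃ M, ∀ t, t ≤ s → ‖v t‖ ≤ M}


/-!
Gluing a bounded backward solution on `(-∞, s]` to the forward solution on `[s, t]` gives a
bounded backward solution on `(-∞, t]`, so `T(t,s)` maps `F(s)` into `F(t)`. If two elements of
`F(s)` have the same image, the difference `z` of the two glued solutions, continued constantly
past `t`, vanishes on `[t - r, ∞)` and is therefore a bounded solution on all of `ℝ`. Since `μ` is
finite, bounded functions lie in `L^p_μ`, so `z ∈ W^{1,p}_μ` with `Λ_L z = 0`, and injectivity of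
`Λ_L` gives `z = 0`. For surjectivity, the backward solution `v` through `ψ ∈ F(t)` restricts to a
backward solution through `vₛ ∈ F(s)`, and continuing `v` past `t` by the forward solution
(a contraction fixed point on intervals of a fixed length) gives `T(t,s) vₛ = ψ`.
-/

variable {n N : ℕ} {r : Fin (N + 1) → ℝ} {A : Fin (N + 1) → ℝ → Matrix (Fin n) (Fin n) ℝ}

theorem DelaysOK.nonneg (hr : DelaysOK r) (j : Fin (N + 1)) : 0 ≤ r j :=
  hr.1 ▸ hr.2.monotone (Fin.zero_le j)

theorem DelaysOK.le_last (hr : DelaysOK r) (j : Fin (N + 1)) : r j ≤ r (Fin.last N) :=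
  hr.2.monotone (Fin.le_last j)

theorem CoeffOK.exists_nonneg_bound (hA : CoeffOK A) :
    ∃ β : ℝ, 0 ≤ β ∧ ∀ j t v, ‖(A j t).mulVec v‖ ≤ β * ‖v‖ := by
  obtain ⟨-, β, hβ⟩ := hA
  exact ⟨max β 0, le_max_right _ _, fun j t v =>
    (hβ j t v).trans (mul_le_mul_of_nonneg_right (le_max_left _ _) (norm_nonneg v))⟩

def delaySum (r : Fin (N + 1) → ℝ) (A : Fin (N + 1) → ℝ → Matrix (Fin n) (Fin n) ℝ)
    (x : ℝ → Fin n → ℝ) (σ : ℝ) : Fin n → ℝ :=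
  ∑ j, (A j σ).mulVec (x (σ - r j))

theorem delaySum_congr {x y : ℝ → Fin n → ℝ} {σ : ℝ} (h : ∀ j, x (σ - r j) = y (σ - r j)) :
    delaySum r A x σ = delaySum r A y σ :=
  Finset.sum_congr rfl fun j _ => by rw [h j]

theorem delaySum_sub (x y : ℝ → Fin n → ℝ) (σ : ℝ) :
    delaySum r A (x - y) σ = delaySum r A x σ - delaySum r A y σ := by
  simp only [delaySum, Pi.sub_apply, Matrix.mulVec_sub, Finset.sum_sub_distrib]

theorem delaySum_zero (σ : ℝ) : delaySum r A 0 σ = 0 := by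
  simp [delaySum]

theorem norm_delaySum_le {β M : ℝ} (hβ0 : 0 ≤ β) (hβ : ∀ j t v, ‖(A j t).mulVec v‖ ≤ β * ‖v‖)
    {x : ℝ → Fin n → ℝ} {σ : ℝ} (hM : ∀ j, ‖x (σ - r j)‖ ≤ M) :
    ‖delaySum r A x σ‖ ≤ (N + 1) * β * M :=
  calc ‖delaySum r A x σ‖ ≤ ∑ j, ‖(A j σ).mulVec (x (σ - r j))‖ := norm_sum_le _ _
    _ ≤ ∑ _j : Fin (N + 1), β * M :=
      Finset.sum_le_sum fun j _ => (hβ j σ _).trans (mul_le_mul_of_nonneg_left (hM j) hβ0)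
    _ = (N + 1) * β * M := by simp; ring

theorem CoeffOK.measurable_delaySum (hA : CoeffOK A) {x : ℝ → Fin n → ℝ} (hx : Measurable x) :
    Measurable (delaySum r A x) := by
  refine measurable_pi_lambda _ fun i => ?_
  simp only [delaySum, Finset.sum_apply, Matrix.mulVec, dotProduct]
  exact Finset.measurable_sum _ fun j _ => Finset.measurable_sum _ fun k _ =>
    (hA.1 j i k).mul (((measurable_pi_apply k).comp hx).comp (measurable_sub_const (r j)))

theorem CoeffOK.intervalIntegrable_delaySum (hA : CoeffOK A) {x : ℝ → Fin n → ℝ}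
    (hx : Continuous x) (a b : ℝ) : IntervalIntegrable (delaySum r A x) volume a b := by
  obtain ⟨β, -, hβ⟩ := hA.exists_nonneg_bound
  have hg : Continuous fun σ => ∑ j, β * ‖x (σ - r j)‖ := by fun_prop
  refine IntervalIntegrable.mono_fun' (hg.intervalIntegrable a b)
    (hA.measurable_delaySum hx.measurable).aestronglyMeasurable
    (ae_of_all _ fun σ => (norm_sum_le _ _).trans (Finset.sum_le_sum fun j _ => hβ j σ _))

instance isFiniteMeasure_muW : IsFiniteMeasure muW :=
  isFiniteMeasure_withDensity_ofReal integrable_inv_one_add_sq.2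

theorem memLpW_of_norm_le {E : Type*} [NormedAddCommGroup E] (p : ℝ≥0∞) {f : ℝ → E} {M : ℝ}
    (hf : AEStronglyMeasurable f volume) (hM : ∀ t, ‖f t‖ ≤ M) : MemLpW p f := by
  have hfM : ∀ t, (‖f t‖₊ : ℝ≥0∞) ≤ ENNReal.ofReal M := fun t => by
    rw [← enorm_eq_nnnorm, ← ofReal_norm]
    exact ENNReal.ofReal_le_ofReal (hM t)
  refine ⟨hf, ?_⟩
  rw [lpNormW]
  split_ifs
  · refine (essSup_le_of_ae_le (ENNReal.ofReal M) (ae_of_all _ fun t => ?_)).trans_lt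
      ENNReal.ofReal_lt_top
    have hw : ENNReal.ofReal ((1 + t ^ 2)⁻¹) ≤ 1 :=
      ENNReal.ofReal_le_one.2 (inv_le_one_of_one_le₀ (by nlinarith))
    simpa using mul_le_mul' (hfM t) hw
  · refine ENNReal.rpow_lt_top_of_nonneg (by positivity) (ne_of_lt ?_)
    calc ∫⁻ t, (‖f t‖₊ : ℝ≥0∞) ^ p.toReal ∂muW
        ≤ ∫⁻ _, ENNReal.ofReal M ^ p.toReal ∂muW :=
          lintegral_mono fun t => ENNReal.rpow_le_rpow (hfM t) ENNReal.toReal_nonneg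
      _ < ⊤ := by
          rw [lintegral_const]
          exact ENNReal.mul_lt_top
            (ENNReal.rpow_lt_top_of_nonneg ENNReal.toReal_nonneg ENNReal.ofReal_ne_top)
            (measure_lt_top _ _)

def SolvesBetween (r : Fin (N + 1) → ℝ) (A : Fin (N + 1) → ℝ → Matrix (Fin n) (Fin n) ℝ)
    (x : ℝ → Fin n → ℝ) (a b : ℝ) : Prop :=
  IntervalIntegrable (delaySum r A x) volume a b ∧ x b = x a + ∫ σ in a..b, delaySum r A x σ

def IsSolOn (r : Fin (N + 1) → ℝ) (A : Fin (N + 1) → ℝ → Matrix (Fin n) (Fin n) ℝ)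
    (x : ℝ → Fin n → ℝ) (I : Set ℝ) : Prop :=
  ∀ a ∈ I, ∀ b ∈ I, SolvesBetween r A x a b

namespace SolvesBetween

variable {x y : ℝ → Fin n → ℝ} {a b c : ℝ}

theorem refl (x : ℝ → Fin n → ℝ) (a : ℝ) : SolvesBetween r A x a a :=
  ⟨.refl, by simp⟩

theorem symm (h : SolvesBetween r A x a b) : SolvesBetween r A x b a :=
  ⟨h.1.symm, by rw [intervalIntegral.integral_symm, h.2]; abel⟩

theorem trans (hab : SolvesBetween r A x a b) (hbc : SolvesBetween r A x b c) :
    SolvesBetween r A x a c :=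
  ⟨hab.1.trans hbc.1, by
    rw [hbc.2, hab.2, add_assoc, intervalIntegral.integral_add_adjacent_intervals hab.1 hbc.1]⟩

theorem congr (h : SolvesBetween r A x a b) (ha : x a = y a) (hb : x b = y b)
    (hxy : EqOn (delaySum r A x) (delaySum r A y) (uIcc a b)) : SolvesBetween r A y a b :=
  ⟨h.1.congr (hxy.mono uIoc_subset_uIcc), by
    rw [← ha, ← hb, h.2, intervalIntegral.integral_congr hxy]⟩

theorem sub (hx : SolvesBetween r A x a b) (hy : SolvesBetween r A y a b) :
    SolvesBetween r A (x - y) a b := by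
  have hxy : delaySum r A (x - y) = delaySum r A x - delaySum r A y :=
    funext (delaySum_sub x y)
  refine ⟨hxy ▸ hx.1.sub hy.1, ?_⟩
  simp only [hxy, Pi.sub_apply]
  rw [hx.2, hy.2, intervalIntegral.integral_sub hx.1 hy.1]
  abel

theorem zero (a b : ℝ) : SolvesBetween r A 0 a b := by
  have h0 : delaySum r A 0 = 0 := funext delaySum_zero
  simp only [SolvesBetween, h0]
  exact ⟨intervalIntegrable_const, by simp⟩

end SolvesBetween

namespace IsSolOn

variable {x y : ℝ → Fin n → ℝ} {I J : Set ℝ}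

theorem mono (h : IsSolOn r A x J) (hIJ : I ⊆ J) : IsSolOn r A x I :=
  fun a ha b hb => h a (hIJ ha) b (hIJ hb)

theorem of_solvesBetween {a : ℝ} (h : ∀ b ∈ I, SolvesBetween r A x a b) :
    IsSolOn r A x I :=
  fun b hb c hc => (h b hb).symm.trans (h c hc)

theorem union {c : ℝ} (hI : IsSolOn r A x I) (hJ : IsSolOn r A x J) (hcI : c ∈ I) (hcJ : c ∈ J) :
    IsSolOn r A x (I ∪ J) := by
  have hc : ∀ b ∈ I ∪ J, SolvesBetween r A x c b := by
    rintro b (hb | hb)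
    exacts [hI c hcI b hb, hJ c hcJ b hb]
  exact of_solvesBetween hc

theorem sub (hx : IsSolOn r A x I) (hy : IsSolOn r A y I) : IsSolOn r A (x - y) I :=
  fun a ha b hb => (hx a ha b hb).sub (hy a ha b hb)

theorem congr (h : IsSolOn r A x I) (hI : I.OrdConnected) (hxy : EqOn x y I)
    (hdelay : ∀ σ ∈ I, ∀ j, x (σ - r j) = y (σ - r j)) : IsSolOn r A y I :=
  fun a ha b hb => (h a ha b hb).congr (hxy ha) (hxy hb)
    fun σ hσ => delaySum_congr (hdelay σ (hI.uIcc_subset ha hb hσ))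

theorem congr_Iic (hr0 : ∀ j, 0 ≤ r j) {c : ℝ} (h : IsSolOn r A x I) (hI : I.OrdConnected)
    (hIc : I ⊆ Iic c) (hxy : EqOn x y (Iic c)) : IsSolOn r A y I :=
  h.congr hI (hxy.mono hIc) fun σ hσ j =>
    hxy (show σ - r j ≤ c by linarith [hr0 j, mem_Iic.1 (hIc hσ)])

theorem congr_Icc (hr0 : ∀ j, 0 ≤ r j) (hrN : ∀ j, r j ≤ r (Fin.last N)) {c d : ℝ}
    (h : IsSolOn r A x (Icc c d)) (hxy : EqOn x y (Icc (c - r (Fin.last N)) d)) :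
    IsSolOn r A y (Icc c d) := by
  have hR : 0 ≤ r (Fin.last N) := hr0 _
  refine h.congr ordConnected_Icc (hxy.mono (Icc_subset_Icc_left (by linarith))) ?_
  exact fun σ hσ j => hxy ⟨by linarith [hrN j, hσ.1], by linarith [hr0 j, hσ.2]⟩

theorem of_eq_zero (hr0 : ∀ j, 0 ≤ r j) (hrN : ∀ j, r j ≤ r (Fin.last N)) {t : ℝ}
    (hz : ∀ τ, t - r (Fin.last N) ≤ τ → x τ = 0) : IsSolOn r A x (Ici t) := by
  have hR : 0 ≤ r (Fin.last N) := hr0 _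
  refine IsSolOn.congr (x := 0) (fun a _ b _ => .zero a b) ordConnected_Ici
    (fun τ hτ => (hz τ (by linarith [mem_Ici.1 hτ])).symm) fun σ hσ j => ?_
  exact (hz _ (by linarith [hrN j, mem_Ici.1 hσ])).symm

theorem hasACDeriv (h : IsSolOn r A x univ) : HasACDeriv x (delaySum r A x) :=
  ⟨fun a b => (h a trivial b trivial).1, fun a b => (h a trivial b trivial).2⟩

end IsSolOn

theorem IsSolUpTo.isSolOn {v : ℝ → Fin n → ℝ} {s : ℝ} (hv : IsSolUpTo r A v s) :
    IsSolOn r A v (Iic s) := by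
  have hle : ∀ a ∈ Iic s, ∀ b ∈ Iic s, a ≤ b → SolvesBetween r A v a b :=
    fun a ha b hb hab => ⟨hv.2.1 a b ha hb, hv.2.2 a b hab hb⟩
  intro a ha b hb
  rcases le_total a b with hab | hba
  exacts [hle a ha b hb hab, (hle b hb a ha hba).symm]

theorem IsSolFrom.isSolOn {x : ℝ → Fin n → ℝ} {s : ℝ} (hx : IsSolFrom r A x s) :
    IsSolOn r A x (Ici s) :=
  .of_solvesBetween fun b hb =>
    ⟨hx.2.1 s b le_rfl hb, hx.2.2 b hb⟩

theorem IsSolOn.isSolUpTo {v : ℝ → Fin n → ℝ} {s : ℝ} (hc : ContinuousOn v (Iic s))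
    (hv : IsSolOn r A v (Iic s)) : IsSolUpTo r A v s :=
  ⟨hc, fun a b ha hb => (hv a ha b hb).1, fun a b hab hb => (hv a (hab.trans hb) b hb).2⟩

theorem IsSolOn.isSolFrom {x : ℝ → Fin n → ℝ} {s : ℝ}
    (hc : ContinuousOn x (Ici (s - r (Fin.last N)))) (hx : IsSolOn r A x (Ici s)) :
    IsSolFrom r A x s :=
  ⟨hc, fun a b ha hb => (hx a ha b hb).1, fun b hb => (hx s self_mem_Ici b hb).2⟩

theorem eq_zero_of_isSolOn_univ {p : ℝ≥0∞} (hA : CoeffOK A)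
    (hinj : ∀ x : ℝ → Fin n → ℝ, MemW1pW p x → SolvesNH r A x 0 → x = 0)
    {z : ℝ → Fin n → ℝ} (hz : Continuous z) {M : ℝ} (hM : ∀ t, ‖z t‖ ≤ M)
    (h : IsSolOn r A z univ) : z = 0 := by
  obtain ⟨β, hβ0, hβ⟩ := hA.exists_nonneg_bound
  have hmem : MemW1pW p z :=
    ⟨memLpW_of_norm_le p hz.aestronglyMeasurable hM, delaySum r A z, h.hasACDeriv,
      memLpW_of_norm_le p (hA.measurable_delaySum hz.measurable).aestronglyMeasurable
        fun σ => norm_delaySum_le hβ0 hβ fun j => hM _⟩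
  refine hinj z hmem ?_
  unfold SolvesNH
  convert h.hasACDeriv using 2 with t
  simp [delaySum]

theorem eqOn_Icc_of_segment_eq {x y : ℝ → Fin n → ℝ} {s : ℝ}
    (h : ∀ θ : Icc (-(r (Fin.last N))) (0 : ℝ), x (s + θ) = y (s + θ)) :
    EqOn x y (Icc (s - r (Fin.last N)) s) := fun τ hτ => by
  simpa using h ⟨τ - s, by constructor <;> linarith [hτ.1, hτ.2]⟩

theorem Matches.eqOn {x y : ℝ → Fin n → ℝ} {s : ℝ}
    {φ : C(Icc (-(r (Fin.last N))) (0 : ℝ), Fin n → ℝ)} (hx : Matches r x s φ)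
    (hy : Matches r y s φ) : EqOn x y (Icc (s - r (Fin.last N)) s) :=
  eqOn_Icc_of_segment_eq fun θ => (hx θ).trans (hy θ).symm

theorem exists_extension_of_contraction (hA : CoeffOK A) {β δ : ℝ} (hβ0 : 0 ≤ β)
    (hβ : ∀ j t v, ‖(A j t).mulVec v‖ ≤ β * ‖v‖) (hδ : 0 ≤ δ) (hK : (N + 1) * β * δ < 1)
    (H : C(ℝ, Fin n → ℝ)) (a : ℝ) :
    ∃ x : C(ℝ, Fin n → ℝ), EqOn x H (Iic a) ∧
      ∀ τ ∈ Icc a (a + δ), x τ = x a + ∫ σ in a..τ, delaySum r A x σ := by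
  have hab : a ≤ a + δ := by linarith
  let I := Icc a (a + δ)
  -- `extend y` continues `y` to the left by the history `H`, shifted by `y a - H a` so that it is
  -- continuous for every `y`; the shift vanishes at the fixed point.
  let extend : C(I, Fin n → ℝ) → C(ℝ, Fin n → ℝ) := fun y =>
    ⟨fun τ => H (min τ a) - H a + y (projIcc a (a + δ) hab τ), by fun_prop⟩
  let Φ : C(I, Fin n → ℝ) → C(I, Fin n → ℝ) := fun y =>
    ⟨fun τ => H a + ∫ σ in a..(τ : ℝ), delaySum r A (extend y) σ,
      continuous_const.add ((intervalIntegral.continuous_primitive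
        (hA.intervalIntegrable_delaySum (extend y).continuous) a).comp continuous_subtype_val)⟩
  have hextend_sub : ∀ y y' τ, ‖(extend y - extend y') τ‖ ≤ dist y y' := fun y y' τ => by
    simpa [extend, ← dist_eq_norm] using y.dist_apply_le_dist (g := y') (projIcc a (a + δ) hab τ)
  have hΦ : ContractingWith ⟨(N + 1) * β * δ, by positivity⟩ Φ := by
    refine ⟨NNReal.coe_lt_coe.1 hK, LipschitzWith.of_dist_le_mul fun y y' => ?_⟩
    change dist (Φ y) (Φ y') ≤ (N + 1) * β * δ * dist y y'
    refine (ContinuousMap.dist_le (by positivity)).2 fun τ => ?_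
    have hτ : |(τ : ℝ) - a| ≤ δ := by
      rw [abs_of_nonneg (by linarith [τ.2.1])]; linarith [τ.2.2]
    rw [dist_eq_norm]
    simp only [Φ, ContinuousMap.coe_mk, add_sub_add_left_eq_sub]
    rw [← intervalIntegral.integral_sub (hA.intervalIntegrable_delaySum (extend y).continuous _ _)
      (hA.intervalIntegrable_delaySum (extend y').continuous _ _)]
    calc _ ≤ (N + 1) * β * dist y y' * |(τ : ℝ) - a| :=
          intervalIntegral.norm_integral_le_of_norm_le_const fun σ _ => by
            rw [← delaySum_sub]
            exact norm_delaySum_le hβ0 hβ fun j => hextend_sub y y' _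
      _ ≤ (N + 1) * β * δ * dist y y' := by
          rw [mul_right_comm]; gcongr
  set y := ContractingWith.fixedPoint Φ hΦ
  have hy : ∀ τ, y τ = H a + ∫ σ in a..(τ : ℝ), delaySum r A (extend y) σ := fun τ =>
    (DFunLike.congr_fun (ContractingWith.fixedPoint_isFixedPt hΦ) τ).symm
  have hya : y ⟨a, left_mem_Icc.2 hab⟩ = H a := by simp [hy]
  refine ⟨extend y, fun τ hτ => ?_, fun τ hτ => ?_⟩
  · simp [extend, min_eq_left (mem_Iic.1 hτ), projIcc_of_le_left hab (mem_Iic.1 hτ), hya]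
  · have hτy : extend y τ = y ⟨τ, hτ⟩ := by
      simp [extend, min_eq_right hτ.1, projIcc_of_mem hab hτ]
    rw [hτy, hy]
    simp [extend, hya]

theorem CoeffOK.exists_extension_isSolOn_Icc (hA : CoeffOK A) :
    ∃ δ > 0, ∀ (H : C(ℝ, Fin n → ℝ)) (a : ℝ), ∃ x : C(ℝ, Fin n → ℝ),
      EqOn x H (Iic a) ∧ IsSolOn r A x (Icc a (a + δ)) := by
  obtain ⟨β, hβ0, hβ⟩ := hA.exists_nonneg_bound
  have hC : 0 ≤ (N + 1 : ℝ) * β := by positivity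
  refine ⟨((N + 1) * β + 1)⁻¹, by positivity, fun H a => ?_⟩
  have hK : (N + 1) * β * ((N + 1) * β + 1)⁻¹ < 1 := by
    rw [← div_eq_mul_inv, div_lt_one (by positivity)]
    linarith
  obtain ⟨x, hxH, hx⟩ := exists_extension_of_contraction hA hβ0 hβ (by positivity) hK H a
  exact ⟨x, hxH, .of_solvesBetween fun τ hτ =>
    ⟨hA.intervalIntegrable_delaySum x.continuous a τ, hx τ hτ⟩⟩

theorem exists_eqOn_Iic_of_eqOn_succ {E : Type*} [TopologicalSpace E] (f : ℕ → C(ℝ, E))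
    {b : ℕ → ℝ} (hb : Monotone b) (hb_top : Tendsto b atTop atTop)
    (hf : ∀ k, EqOn (f (k + 1)) (f k) (Iic (b k))) :
    ∃ g : C(ℝ, E), ∀ k, EqOn g (f k) (Iic (b k)) := by
  have hle : ∀ k m, k ≤ m → EqOn (f m) (f k) (Iic (b k)) := by
    intro k m hkm
    induction m, hkm using Nat.le_induction with
    | base => exact fun _ _ => rfl
    | succ m hkm ih =>
      exact fun τ hτ => (hf m (mem_Iic.2 ((mem_Iic.1 hτ).trans (hb hkm)))).trans (ih hτ)
  choose K hK using fun τ => (hb_top.eventually_gt_atTop τ).exists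
  have hg : ∀ k, EqOn (fun τ => f (K τ) τ) (f k) (Iic (b k)) := fun k τ hτ => by
    rcases le_total k (K τ) with h | h
    exacts [hle k (K τ) h hτ, (hle (K τ) k h (mem_Iic.2 (hK τ).le)).symm]
  refine ⟨⟨fun τ => f (K τ) τ, continuous_iff_continuousAt.2 fun τ => ?_⟩, hg⟩
  refine (f (K τ)).continuous.continuousAt.congr ?_
  filter_upwards [Iio_mem_nhds (hK τ)] with σ hσ
  exact (hg (K τ) (mem_Iic.2 (le_of_lt hσ))).symm

theorem CoeffOK.exists_extension_isSolOn_Ici (hA : CoeffOK A) (hr0 : ∀ j, 0 ≤ r j)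
    (H : C(ℝ, Fin n → ℝ)) (t₀ : ℝ) :
    ∃ x : C(ℝ, Fin n → ℝ), EqOn x H (Iic t₀) ∧ IsSolOn r A x (Ici t₀) := by
  obtain ⟨δ, hδ, hstep⟩ := hA.exists_extension_isSolOn_Icc (r := r)
  choose step hstep_eq hstep_sol using hstep
  let b : ℕ → ℝ := fun k => t₀ + k * δ
  let f : ℕ → C(ℝ, Fin n → ℝ) := fun k => Nat.rec H (fun k fk => step fk (b k)) k
  have hb : Monotone b := fun k m hkm => by
    simp only [b]; gcongr
  have hb_top : Tendsto b atTop atTop :=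
    tendsto_atTop_add_const_left _ _ (tendsto_natCast_atTop_atTop.atTop_mul_const hδ)
  have hf_sol : ∀ k, IsSolOn r A (f k) (Icc t₀ (b k)) := by
    intro k
    induction k with
    | zero =>
      simp only [b, Nat.cast_zero, zero_mul, add_zero, Icc_self]
      rintro a rfl c rfl
      exact .refl _ _
    | succ k ih =>
      have hbk : b (k + 1) = b k + δ := by simp only [b]; push_cast; ring
      have ht₀ : t₀ ≤ b k := le_add_of_nonneg_right (by positivity)
      rw [hbk, ← Icc_union_Icc_eq_Icc ht₀ (by linarith)]
      exact (ih.congr_Iic hr0 ordConnected_Icc Icc_subset_Iic_self (hstep_eq _ _).symm).union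
        (hstep_sol _ _) (right_mem_Icc.2 ht₀) (left_mem_Icc.2 (by linarith))
  obtain ⟨g, hg⟩ := exists_eqOn_Iic_of_eqOn_succ f hb hb_top fun k => hstep_eq _ _
  refine ⟨g, fun τ hτ => hg 0 (by simpa [b] using hτ), fun a ha c hc => ?_⟩
  obtain ⟨k, hk⟩ := (hb_top.eventually_gt_atTop (max a c)).exists
  exact ((hf_sol k).congr_Iic hr0 ordConnected_Icc Icc_subset_Iic_self (hg k).symm)
    a ⟨ha, by linarith [le_max_left a c]⟩ c ⟨hc, by linarith [le_max_right a c]⟩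

theorem exists_glued_solution (hr0 : ∀ j, 0 ≤ r j)
    (hrN : ∀ j, r j ≤ r (Fin.last N)) {s t : ℝ} (hst : s ≤ t) {v x : ℝ → Fin n → ℝ} {M : ℝ}
    (hv : IsSolUpTo r A v s) (hvM : ∀ τ, τ ≤ s → ‖v τ‖ ≤ M) (hx : IsSolFrom r A x s)
    (hvx : EqOn v x (Icc (s - r (Fin.last N)) s)) :
    ∃ V : ℝ → Fin n → ℝ, Continuous V ∧ (∃ M', ∀ τ, ‖V τ‖ ≤ M') ∧ EqOn V v (Iic s) ∧
      (∀ τ, s - r (Fin.last N) ≤ τ → V τ = x (min τ t)) ∧ IsSolOn r A V (Iic t) := by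
  have hR : 0 ≤ r (Fin.last N) := hr0 _
  let V : ℝ → Fin n → ℝ := fun τ => if τ ≤ s then v (min τ s) else x (max s (min τ t))
  have hVv : EqOn V v (Iic s) := fun τ hτ => by
    simp [V, mem_Iic.1 hτ]
  have hVx : ∀ τ, s - r (Fin.last N) ≤ τ → V τ = x (min τ t) := by
    intro τ hτ
    by_cases h : τ ≤ s
    · rw [hVv h, min_eq_left (h.trans hst)]
      exact hvx ⟨hτ, h⟩
    · simp only [V, if_neg h]
      rw [max_eq_right (le_min (le_of_not_ge h) hst)]
  have hVc : Continuous V := by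
    refine Continuous.if_le (hv.1.comp_continuous (by fun_prop) fun τ => min_le_right τ s)
      (hx.1.comp_continuous (by fun_prop) fun τ => ?_) continuous_id continuous_const
      fun τ hτ => ?_
    · exact mem_Ici.2 (by linarith [le_max_left s (min τ t)])
    · simp only [hτ, min_self, min_eq_left hst, max_self]
      exact hvx ⟨by linarith, le_rfl⟩
  have hVM : ∃ M', ∀ τ, ‖V τ‖ ≤ M' := by
    obtain ⟨Mx, hMx⟩ := IsCompact.exists_bound_of_continuousOn
      (isCompact_Icc (a := s - r (Fin.last N)) (b := t)) (hx.1.mono Icc_subset_Ici_self)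
    refine ⟨max M Mx, fun τ => ?_⟩
    rcases le_total τ s with h | h
    · rw [hVv h]
      exact (hvM τ h).trans (le_max_left _ _)
    · rw [hVx τ (by linarith)]
      exact (hMx _ ⟨by linarith [le_min h hst], min_le_right _ _⟩).trans (le_max_right _ _)
  refine ⟨V, hVc, hVM, hVv, hVx, ?_⟩
  rw [← Iic_union_Icc_eq_Iic hst]
  refine (hv.isSolOn.congr_Iic hr0 ordConnected_Iic subset_rfl hVv.symm).union ?_
    self_mem_Iic (left_mem_Icc.2 hst)
  exact (hx.isSolOn.mono Icc_subset_Ici_self).congr_Icc hr0 hrN fun τ hτ => by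
    rw [hVx τ hτ.1, min_eq_left hτ.2]

theorem mapsTo_Fset (hr0 : ∀ j, 0 ≤ r j) (hrN : ∀ j, r j ≤ r (Fin.last N)) {s t : ℝ}
    (hst : s ≤ t) {φ : C(Icc (-(r (Fin.last N))) (0 : ℝ), Fin n → ℝ)}
    (hφ : φ ∈ Fset r A s) {x : ℝ → Fin n → ℝ} (hx : IsSolFrom r A x s)
    (hxφ : Matches r x s φ) : ∃ ψ ∈ Fset r A t, Matches r x t ψ := by
  obtain ⟨v, hv, hvφ, M, hvM⟩ := hφ
  obtain ⟨V, hVc, ⟨M', hVM⟩, -, hVx, hV⟩ :=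
    exists_glued_solution hr0 hrN hst hv hvM hx (hvφ.eqOn hxφ)
  refine ⟨⟨fun θ => V (t + θ), by fun_prop⟩,
    ⟨V, hV.isSolUpTo hVc.continuousOn, fun θ => rfl, M', fun τ _ => hVM τ⟩, fun θ => ?_⟩
  have hθ := θ.2
  rw [ContinuousMap.coe_mk, hVx _ (by linarith [hθ.1]), min_eq_left (by linarith [hθ.2])]

theorem injOn_Fset {p : ℝ≥0∞} (hA : CoeffOK A) (hr0 : ∀ j, 0 ≤ r j)
    (hrN : ∀ j, r j ≤ r (Fin.last N))
    (hinj : ∀ x : ℝ → Fin n → ℝ, MemW1pW p x → SolvesNH r A x 0 → x = 0)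
    {s t : ℝ} (hst : s ≤ t) {φ φ' : C(Icc (-(r (Fin.last N))) (0 : ℝ), Fin n → ℝ)}
    (hφ : φ ∈ Fset r A s) (hφ' : φ' ∈ Fset r A s) {x x' : ℝ → Fin n → ℝ}
    (hx : IsSolFrom r A x s) (hxφ : Matches r x s φ)
    (hx' : IsSolFrom r A x' s) (hx'φ' : Matches r x' s φ')
    (hxt : ∀ θ : Icc (-(r (Fin.last N))) (0 : ℝ), x (t + θ) = x' (t + θ)) : φ = φ' := by
  obtain ⟨v, hv, hvφ, M, hvM⟩ := hφ
  obtain ⟨v', hv', hv'φ', M', hv'M⟩ := hφ'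
  obtain ⟨V, hVc, ⟨MV, hVM⟩, hVv, hVx, hV⟩ :=
    exists_glued_solution hr0 hrN hst hv hvM hx (hvφ.eqOn hxφ)
  obtain ⟨V', hV'c, ⟨MV', hV'M⟩, hV'v, hV'x, hV'⟩ :=
    exists_glued_solution hr0 hrN hst hv' hv'M hx' (hv'φ'.eqOn hx'φ')
  have hxx' := eqOn_Icc_of_segment_eq hxt
  have hR : 0 ≤ r (Fin.last N) := hr0 _
  have hzero : ∀ τ, t - r (Fin.last N) ≤ τ → (V - V') τ = 0 := fun τ hτ => by
    rw [Pi.sub_apply, hVx τ (by linarith), hV'x τ (by linarith),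
      hxx' ⟨le_min hτ (by linarith), min_le_right _ _⟩, sub_self]
  have hsol : IsSolOn r A (V - V') univ := by
    rw [← Iic_union_Ici (a := t)]
    exact (hV.sub hV').union (.of_eq_zero hr0 hrN hzero) self_mem_Iic self_mem_Ici
  have hVV' := eq_zero_of_isSolOn_univ hA hinj (hVc.sub hV'c)
    (fun τ => (norm_sub_le _ _).trans (add_le_add (hVM τ) (hV'M τ))) hsol
  ext θ : 1
  have hθ : s + (θ : ℝ) ≤ s := by linarith [θ.2.2]
  rw [← hvφ θ, ← hv'φ' θ, ← hVv hθ, ← hV'v hθ]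
  exact sub_eq_zero.1 (congrFun hVV' _)

theorem surjOn_Fset (hA : CoeffOK A) (hr0 : ∀ j, 0 ≤ r j) {s t : ℝ} (hst : s ≤ t)
    {ψ : C(Icc (-(r (Fin.last N))) (0 : ℝ), Fin n → ℝ)} (hψ : ψ ∈ Fset r A t) :
    ∃ φ ∈ Fset r A s, ∃ x : ℝ → Fin n → ℝ,
      IsSolFrom r A x s ∧ Matches r x s φ ∧ Matches r x t ψ := by
  obtain ⟨v, hv, hvψ, M, hvM⟩ := hψ
  let H : C(ℝ, Fin n → ℝ) :=
    ⟨fun τ => v (min τ t), hv.1.comp_continuous (by fun_prop) fun τ => min_le_right τ t⟩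
  obtain ⟨x, hxH, hx⟩ := hA.exists_extension_isSolOn_Ici hr0 H t
  have hxv : EqOn x v (Iic t) := fun τ hτ =>
    (hxH hτ).trans (by simp [H, min_eq_left (mem_Iic.1 hτ)])
  have hxsol : IsSolOn r A x univ := by
    rw [← Iic_union_Ici (a := t)]
    exact (hv.isSolOn.congr_Iic hr0 ordConnected_Iic subset_rfl hxv.symm).union hx
      self_mem_Iic self_mem_Ici
  refine ⟨⟨fun θ => x (s + θ), by fun_prop⟩,
    ⟨x, (hxsol.mono (subset_univ _)).isSolUpTo x.continuous.continuousOn, fun θ => rfl, M,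
      fun τ hτ => by rw [hxv (hτ.trans hst)]; exact hvM τ (hτ.trans hst)⟩,
    x, (hxsol.mono (subset_univ _)).isSolFrom x.continuous.continuousOn, fun θ => rfl,
    fun θ => (hxv (by linarith [θ.2.2] : t + (θ : ℝ) ≤ t)).trans (hvψ θ)⟩

theorem restriction_bijective_general {n N : ℕ}
    (r : Fin (N + 1) → ℝ) (A : Fin (N + 1) → ℝ → Matrix (Fin n) (Fin n) ℝ)
    (hr : DelaysOK r) (hA : CoeffOK A)
    (p : ℝ≥0∞)
    (hinj : ∀ x : ℝ → Fin n → ℝ, MemW1pW p x → SolvesNH r A x 0 → x = 0) :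
    ∀ s t : ℝ, s ≤ t →
      -- `T(t,s)` maps `F(s)` into `F(t)`
      (∀ φ ∈ Fset r A s, ∀ x : ℝ → Fin n → ℝ,
        IsSolFrom r A x s → Matches r x s φ → ∃ ψ ∈ Fset r A t, Matches r x t ψ) ∧
      -- `T(t,s)` is injective on `F(s)`
      (∀ φ φ' : C(Set.Icc (-(r (Fin.last N))) (0 : ℝ), Fin n → ℝ),
        φ ∈ Fset r A s → φ' ∈ Fset r A s →
        ∀ x x' : ℝ → Fin n → ℝ,
          IsSolFrom r A x s → Matches r x s φ →
          IsSolFrom r A x' s → Matches r x' s φ' →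
          (∀ θ : Set.Icc (-(r (Fin.last N))) (0 : ℝ), x (t + (θ : ℝ)) = x' (t + (θ : ℝ))) →
          φ = φ') ∧
      -- `T(t,s)` maps `F(s)` onto `F(t)`
      (∀ ψ ∈ Fset r A t, ∃ φ ∈ Fset r A s, ∃ x : ℝ → Fin n → ℝ,
        IsSolFrom r A x s ∧ Matches r x s φ ∧ Matches r x t ψ) := by
  intro s t hst
  exact ⟨fun φ hφ x hx hxφ => mapsTo_Fset hr.nonneg hr.le_last hst hφ hx hxφ,
    fun φ φ' hφ hφ' x x' hx hxφ hx' hx'φ' hxt =>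
      injOn_Fset hA hr.nonneg hr.le_last hinj hst hφ hφ' hx hxφ hx' hx'φ' hxt,
    fun ψ hψ => surjOn_Fset hA hr.nonneg hst hψ⟩

/-- If the equation is asymptotically hyperbolic and `Λ_L` is bijective, then
for `t ≥ s` the solution operator `T(t,s)` restricted to `F(s)` is a bijection onto `F(t)`. -/
theorem restriction_bijective {n N : ℕ} (hn : 1 ≤ n)
    (r : Fin (N + 1) → ℝ) (A : Fin (N + 1) → ℝ → Matrix (Fin n) (Fin n) ℝ)
    (hr : DelaysOK r) (hA : CoeffOK A) (hAH : AsympHyperbolic r A)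
    (p : ℝ≥0∞) (hp : 1 ≤ p)
    (hinj : ∀ x : ℝ → Fin n → ℝ, MemW1pW p x → SolvesNH r A x 0 → x = 0)
    (hsurj : ∀ h : ℝ → Fin n → ℝ, MemLpW p h → ∃ x, MemW1pW p x ∧ SolvesNH r A x h) :
    ∀ s t : ℝ, s ≤ t →
      -- `T(t,s)` maps `F(s)` into `F(t)`
      (∀ φ ∈ Fset r A s, ∀ x : ℝ → Fin n → ℝ,
        IsSolFrom r A x s → Matches r x s φ → ∃ ψ ∈ Fset r A t, Matches r x t ψ) ∧
      -- `T(t,s)` is injective on `F(s)`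
      (∀ φ φ' : C(Set.Icc (-(r (Fin.last N))) (0 : ℝ), Fin n → ℝ),
        φ ∈ Fset r A s → φ' ∈ Fset r A s →
        ∀ x x' : ℝ → Fin n → ℝ,
          IsSolFrom r A x s → Matches r x s φ →
          IsSolFrom r A x' s → Matches r x' s φ' →
          (∀ θ : Set.Icc (-(r (Fin.last N))) (0 : ℝ), x (t + (θ : ℝ)) = x' (t + (θ : ℝ))) →
          φ = φ') ∧
      -- `T(t,s)` maps `F(s)` onto `F(t)`
      (∀ ψ ∈ Fset r A t, ∃ φ ∈ Fset r A s, ∃ x : ℝ → Fin n → ℝ,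
        IsSolFrom r A x s ∧ Matches r x s φ ∧ Matches r x t ψ) :=
  restriction_bijective_general r A hr hA p hinj
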